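/- Define s₀ : ℝ → ℝ by s₀(x) = x³ − 4x² + 8x − 8 + 16/(eˣ + 1). Then s₀(x) < 0 for all x < 0 and s₀(x) > 0 for all x > 0. -/

import Mathlib

/-!
Multiplying by `eˣ + 1 > 0`, the sign of `s₀` is that of
`g(x) = (x³ − 4x² + 8x − 8)(eˣ + 1) + 16`, which vanishes at `0`. Its derivative is
`g'(x) = x²((x − 1)eˣ + 1) + 2(x − 2)²`; the first summand is nonnegative because
`1 − x ≤ e⁻ˣ`, and the two summands do not vanish together, so `g` is strictly increasing.
-/

open Real

lemma sub_one_mul_exp_add_one_nonneg (x : ℝ) : 0 ≤ (x - 1) * exp x + 1 := by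
  have h := mul_le_mul_of_nonneg_right (one_sub_le_exp_neg x) (exp_pos x).le
  rw [← exp_add, neg_add_cancel, exp_zero] at h
  linarith

noncomputable def s0Numerator (x : ℝ) : ℝ :=
  (x ^ 3 - 4 * x ^ 2 + 8 * x - 8) * (exp x + 1) + 16

lemma s0Numerator_zero : s0Numerator 0 = 0 := by
  norm_num [s0Numerator]

lemma hasDerivAt_s0Numerator (x : ℝ) :
    HasDerivAt s0Numerator (x ^ 2 * ((x - 1) * exp x + 1) + 2 * (x - 2) ^ 2) x := by
  have hpoly : HasDerivAt (fun x : ℝ => x ^ 3 - 4 * x ^ 2 + 8 * x - 8)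
      (3 * x ^ 2 - 8 * x + 8) x := by
    refine ((((hasDerivAt_pow 3 x).sub ((hasDerivAt_pow 2 x).const_mul 4)).add
      ((hasDerivAt_id x).const_mul 8)).sub_const 8).congr_deriv ?_
    ring
  refine ((hpoly.mul ((hasDerivAt_exp x).add_const 1)).add_const 16).congr_deriv ?_
  ring

lemma deriv_s0Numerator_pos (x : ℝ) : 0 < deriv s0Numerator x := by
  rw [(hasDerivAt_s0Numerator x).deriv]
  have hfirst : 0 ≤ x ^ 2 * ((x - 1) * exp x + 1) :=
    mul_nonneg (sq_nonneg x) (sub_one_mul_exp_add_one_nonneg x)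
  rcases eq_or_ne x 2 with rfl | hx
  · norm_num
    positivity
  · have : 0 < (x - 2) ^ 2 := by positivity [sub_ne_zero.2 hx]
    linarith

lemma strictMono_s0Numerator : StrictMono s0Numerator :=
  strictMono_of_deriv_pos deriv_s0Numerator_pos

lemma s0_eq_s0Numerator_div (x : ℝ) :
    x ^ 3 - 4 * x ^ 2 + 8 * x - 8 + 16 / (exp x + 1) = s0Numerator x / (exp x + 1) := by
  have : exp x + 1 ≠ 0 := by positivity
  field_simp
  rw [s0Numerator]
  ring

theorem s0_sign :
    (∀ x : ℝ, x < 0 → x ^ 3 - 4 * x ^ 2 + 8 * x - 8 + 16 / (Real.exp x + 1) < 0) ∧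
    (∀ x : ℝ, 0 < x → 0 < x ^ 3 - 4 * x ^ 2 + 8 * x - 8 + 16 / (Real.exp x + 1)) := by
  have hden (x : ℝ) : 0 < exp x + 1 := by positivity
  refine ⟨fun x hx => ?_, fun x hx => ?_⟩ <;> rw [s0_eq_s0Numerator_div]
  · exact div_neg_of_neg_of_pos (s0Numerator_zero ▸ strictMono_s0Numerator hx) (hden x)
  · exact div_pos (s0Numerator_zero ▸ strictMono_s0Numerator hx) (hden x)
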